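/- Let c, u, v, z be points in the Euclidean plane with d(c,u) = d(c,v) = R. Let c' be the midpoint of u and v, and let z be any point at distance d(u,v)/2 from c'. Then d(c,z) ≤ √2 · R. -/
import Mathlib

theorem stmt_0 (c u v z : EuclideanSpace ℝ (Fin 2)) (R : ℝ) (hR : 0 < R)
    (hu : dist c u = R) (hv : dist c v = R)
    (hz : dist (midpoint ℝ u v) z = dist u v / 2) :
    dist c z ≤ Real.sqrt 2 * R := by
  have hap := EuclideanGeometry.dist_sq_add_dist_sq_eq_two_mul_dist_midpoint_sq_add_half_dist_sq c u v
  rw [hu, hv] at hap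
  set a := dist c (midpoint ℝ u v) with ha
  set b := dist u v / 2 with hb
  have ha0 : 0 ≤ a := dist_nonneg
  have hb0 : 0 ≤ b := by rw [hb]; positivity
  have key : a ^ 2 + b ^ 2 = R ^ 2 := by nlinarith
  have htri : dist c z ≤ a + b :=
    calc dist c z ≤ a + dist (midpoint ℝ u v) z := dist_triangle _ _ _
    _ = a + b := by rw [hz]
  have hs : (0:ℝ) ≤ Real.sqrt 2 := Real.sqrt_nonneg 2
  have hs2 : Real.sqrt 2 ^ 2 = 2 := Real.sq_sqrt (by norm_num)
  have : a + b ≤ Real.sqrt 2 * R := by nlinarith [sq_nonneg (a - b), mul_nonneg hs hR.le, sq_nonneg (a + b + Real.sqrt 2 * R)]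
  linarith
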